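/- arXiv:1607.01993 — 2 statements merged into one kernel-verified Lean document; each statement's English description precedes it below -/
import Mathlib

section
/- A quantifier-free symbolic heap A of array separation logic is satisfiable (i.e., there exist a stack s and heap h with s,h ⊨ A) if and only if the arithmetic formula γ(A) is satisfiable over ℕ (i.e., there exists a stack s with s ⊨ γ(A)). -/
/-! ## Array separation logic (ASL): syntax and stack-heap semantics -/

/-- Terms of array separation logic: variables (named by naturals), constants,
addition, and multiplication by a constant. -/
inductive Trm : Type where
  | var : ℕ → Trm
  | const : ℕ → Trm
  | add : Trm → Trm → Trm
  | smul : ℕ → Trm → Trm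

/-- A stack maps variables to naturals. -/
abbrev Stack := ℕ → ℕ

/-- Evaluation of terms under a stack. -/
def Trm.eval (s : Stack) : Trm → ℕ
  | .var x => s x
  | .const n => n
  | .add t u => t.eval s + u.eval s
  | .smul n t => n * t.eval s

/-- Variables occurring in a term. -/
def Trm.vars : Trm → Set ℕ
  | .var x => {x}
  | .const _ => ∅
  | .add t u => t.vars ∪ u.vars
  | .smul _ t => t.vars

/-- Pure formulas: conjunctions of atomic arithmetic constraints. -/
inductive PureF : Type where
  | tru : PureF
  | eq : Trm → Trm → PureF
  | ne : Trm → Trm → PureF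
  | le : Trm → Trm → PureF
  | lt : Trm → Trm → PureF
  | and : PureF → PureF → PureF

/-- Satisfaction of pure formulas (depends only on the stack). -/
def PureF.sat (s : Stack) : PureF → Prop
  | .tru => True
  | .eq t u => t.eval s = u.eval s
  | .ne t u => t.eval s ≠ u.eval s
  | .le t u => t.eval s ≤ u.eval s
  | .lt t u => t.eval s < u.eval s
  | .and p q => p.sat s ∧ q.sat s

def PureF.vars : PureF → Set ℕ
  | .tru => ∅
  | .eq t u => t.vars ∪ u.vars
  | .ne t u => t.vars ∪ u.vars
  | .le t u => t.vars ∪ u.vars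
  | .lt t u => t.vars ∪ u.vars
  | .and p q => p.vars ∪ q.vars

/-- The (top-level) terms occurring in a pure formula. -/
def PureF.trms : PureF → List Trm
  | .tru => []
  | .eq t u => [t, u]
  | .ne t u => [t, u]
  | .le t u => [t, u]
  | .lt t u => [t, u]
  | .and p q => p.trms ++ q.trms

/-- The conjuncts of a pure formula. -/
def PureF.conjuncts : PureF → List PureF
  | .and p q => p.conjuncts ++ q.conjuncts
  | p => [p]

/-- Finite conjunction. -/
def bigAnd : List PureF → PureF
  | [] => .tru
  | p :: ps => .and p (bigAnd ps)

/-- Spatial formulas: `emp`, points-to, arrays, and separating conjunction. -/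
inductive Spatial : Type where
  | emp : Spatial
  | pto : Trm → Trm → Spatial
  | arr : Trm → Trm → Spatial
  | star : Spatial → Spatial → Spatial

/-- Heaps: finite partial functions from ℕ (locations) to ℕ (values). -/
abbrev Heap := Finmap (fun _ : ℕ => ℕ)

/-- Satisfaction of spatial formulas. -/
def Spatial.sat (s : Stack) : Spatial → Heap → Prop
  | .emp, h => h = ∅
  | .pto t u, h =>
      h.keys = {Trm.eval s t} ∧ Finmap.lookup (Trm.eval s t) h = some (Trm.eval s u)
  | .arr t u, h =>
      Trm.eval s t ≤ Trm.eval s u ∧ h.keys = Finset.Icc (Trm.eval s t) (Trm.eval s u)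
  | .star F G, h =>
      ∃ h₁ h₂ : Heap, h₁.Disjoint h₂ ∧ h = h₁ ∪ h₂ ∧ F.sat s h₁ ∧ G.sat s h₂

def Spatial.vars : Spatial → Set ℕ
  | .emp => ∅
  | .pto t u => t.vars ∪ u.vars
  | .arr t u => t.vars ∪ u.vars
  | .star F G => F.vars ∪ G.vars

/-- The (top-level) terms occurring in a spatial formula. -/
def Spatial.trms : Spatial → List Trm
  | .emp => []
  | .pto t u => [t, u]
  | .arr t u => [t, u]
  | .star F G => F.trms ++ G.trms

/-- The points-to atoms of a spatial formula, as (address, value) pairs. -/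
def Spatial.ptos : Spatial → List (Trm × Trm)
  | .emp => []
  | .pto t u => [(t, u)]
  | .arr _ _ => []
  | .star F G => F.ptos ++ G.ptos

/-- The array atoms of a spatial formula, as endpoint pairs. -/
def Spatial.arrs : Spatial → List (Trm × Trm)
  | .emp => []
  | .pto _ _ => []
  | .arr t u => [(t, u)]
  | .star F G => F.arrs ++ G.arrs

/-- The arrays of the array abstraction `⟨A⟩`: each points-to `c ↦ d` is
replaced by the single-cell array `array(c,c)`. -/
def Spatial.absArrays : Spatial → List (Trm × Trm)
  | .emp => []
  | .pto t _ => [(t, t)]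
  | .arr t u => [(t, u)]
  | .star F G => F.absArrays ++ G.absArrays

/-- Finite separating conjunction. -/
def bigStar : List Spatial → Spatial
  | [] => .emp
  | F :: Fs => .star F (bigStar Fs)

/-- Quantifier-free symbolic heaps `Π : F`. -/
structure SymHeap : Type where
  pure : PureF
  spatial : Spatial

/-- Satisfaction of quantifier-free symbolic heaps. -/
def SymHeap.sat (s : Stack) (h : Heap) (A : SymHeap) : Prop :=
  A.pure.sat s ∧ A.spatial.sat s h

def SymHeap.vars (A : SymHeap) : Set ℕ := A.pure.vars ∪ A.spatial.vars

/-- All (top-level) terms occurring in a symbolic heap. -/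
def SymHeap.trms (A : SymHeap) : List Trm := A.pure.trms ++ A.spatial.trms

/-- Lifting `*` to symbolic heaps: conjoin pure parts, `*`-conjoin spatial parts. -/
def SymHeap.star (A X : SymHeap) : SymHeap :=
  ⟨.and A.pure X.pure, .star A.spatial X.spatial⟩

/-- Satisfiability of a symbolic heap. -/
def SymHeap.Satisfiable (A : SymHeap) : Prop := ∃ (s : Stack) (h : Heap), A.sat s h

/-- Semantic entailment between quantifier-free symbolic heaps. -/
def Entails (A B : SymHeap) : Prop := ∀ (s : Stack) (h : Heap), A.sat s h → B.sat s h

/-- Existentially quantified symbolic heaps `∃ z⃗. Π : F`. -/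
structure QSymHeap : Type where
  bound : List ℕ
  body : SymHeap

/-- Satisfaction of quantified symbolic heaps: some extension of the stack on the
bound variables satisfies the body. -/
def QSymHeap.sat (s : Stack) (h : Heap) (B : QSymHeap) : Prop :=
  ∃ s' : Stack, (∀ x : ℕ, x ∉ B.bound → s' x = s x) ∧ B.body.sat s' h

/-! ## The arithmetic encodings γ, β, φ, ψ₁, ψ₂, χ (interpreted over stacks) -/

/-- `s ⊨ γ(A)`: the Presburger satisfiability encoding of `A`, i.e. the pure part
of `A` together with well-definedness and pairwise disjointness of the arrays of
the array abstraction `⟨A⟩`. -/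
def gammaSat (A : SymHeap) (s : Stack) : Prop :=
  A.pure.sat s ∧
  (∀ p ∈ A.spatial.absArrays, Trm.eval s p.1 ≤ Trm.eval s p.2) ∧
  A.spatial.absArrays.Pairwise (fun p q =>
    Trm.eval s p.2 < Trm.eval s q.1 ∨ Trm.eval s q.2 < Trm.eval s p.1)

/-- `s ⊨ β(A,B)`. -/
def betaSat (A B : SymHeap) (s : Stack) : Prop :=
  gammaSat A s ∧ gammaSat B s ∧
  (∀ p ∈ B.spatial.ptos, ∀ q ∈ A.spatial.arrs,
      Trm.eval s p.1 < Trm.eval s q.1 ∨ Trm.eval s p.1 > Trm.eval s q.2) ∧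
  (∀ p ∈ A.spatial.ptos, ∀ q ∈ B.spatial.ptos,
      Trm.eval s p.1 ≠ Trm.eval s q.1 ∨ Trm.eval s p.2 = Trm.eval s q.2)

/-- The term set `Terms(A,B)`: all terms occurring in `A` and `B`, together with
the successor terms `b_i + 1`, `d_i + 1` (array right endpoints) and
`t_i + 1`, `v_i + 1` (points-to addresses). -/
def termSet (A B : SymHeap) : List Trm :=
  A.trms ++ B.trms ++
  (A.spatial.arrs.map fun p => Trm.add p.2 (Trm.const 1)) ++
  (B.spatial.arrs.map fun p => Trm.add p.2 (Trm.const 1)) ++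
  (A.spatial.ptos.map fun p => Trm.add p.1 (Trm.const 1)) ++
  (B.spatial.ptos.map fun p => Trm.add p.1 (Trm.const 1))

/-- A solution seed for the biabduction instance `(A,B)`. -/
def IsSolutionSeed (A B : SymHeap) (Δ : PureF) : Prop :=
  (∃ s : Stack, Δ.sat s) ∧
  (∀ s : Stack, Δ.sat s → betaSat A B s) ∧
  (∀ δ ∈ Δ.conjuncts, ∃ t ∈ termSet A B, ∃ u ∈ termSet A B,
      δ = PureF.lt t u ∨ δ = PureF.eq t u) ∧
  (∀ t ∈ termSet A B, ∀ u ∈ termSet A B, ∃ δ ∈ Δ.conjuncts,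
      δ = PureF.lt t u ∨ δ = PureF.lt u t ∨ δ = PureF.eq t u)

/-- The (quantifier-free) biabduction problem `(A,B)` has a solution. -/
def HasBiabductionSolution (A B : SymHeap) : Prop :=
  ∃ X Y : SymHeap, (A.star X).Satisfiable ∧ Entails (A.star X) (B.star Y)

/-- `s ⊨ φ(A,B)` (over the array abstractions of `A` and `B`). -/
def phiSat (A B : SymHeap) (s : Stack) : Prop :=
  ∃ x : ℕ,
    (∃ p ∈ A.spatial.absArrays, Trm.eval s p.1 ≤ x ∧ x ≤ Trm.eval s p.2) ∧
    ∀ q ∈ B.spatial.absArrays, x < Trm.eval s q.1 ∨ x > Trm.eval s q.2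

/-- `s ⊨ ψ₁(A,B)`: some points-to address of `B` is covered by an array of `A`. -/
def psi1Sat (A B : SymHeap) (s : Stack) : Prop :=
  ∃ p ∈ A.spatial.arrs, ∃ q ∈ B.spatial.ptos,
    Trm.eval s p.1 ≤ Trm.eval s q.1 ∧ Trm.eval s q.1 ≤ Trm.eval s p.2

/-- `s ⊨ ψ₂(A,B)`: some pointers of `A` and `B` share an address but disagree on
their contents. -/
def psi2Sat (A B : SymHeap) (s : Stack) : Prop :=
  ∃ p ∈ A.spatial.ptos, ∃ q ∈ B.spatial.ptos,
    Trm.eval s p.1 = Trm.eval s q.1 ∧ Trm.eval s p.2 ≠ Trm.eval s q.2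

/-- `s ⊨ χ(A, ∃z⃗.Q)`. -/
def chiSat (A : SymHeap) (zs : List ℕ) (Q : SymHeap) (s : Stack) : Prop :=
  gammaSat A s ∧
  ∀ s' : Stack, (∀ x : ℕ, x ∉ zs → s' x = s x) →
    (¬ gammaSat Q s' ∨ phiSat A Q s' ∨ phiSat Q A s' ∨
      psi1Sat A Q s' ∨ psi2Sat A Q s')

/-! A heap satisfying the spatial part of `A` has as domain the union of the intervals of the
array abstraction `⟨A⟩`, and separating conjunction forces these intervals to be pairwise
disjoint; conversely, nonempty pairwise disjoint intervals can be filled with arbitrary values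
and glued into one heap, the cell of a points-to `c ↦ d` receiving the value of `d`. -/

theorem Finmap.exists_keys_eq {α : Type*} {β : α → Type*} [DecidableEq α] (f : ∀ a, β a)
    (t : Finset α) : ∃ m : Finmap β, m.keys = t := by
  induction t using Finset.induction_on with
  | empty => exact ⟨∅, Finmap.keys_empty⟩
  | insert a t _ ih =>
    obtain ⟨m, rfl⟩ := ih
    exact ⟨m.insert a (f a), by ext; simp [Finmap.mem_keys, Finmap.mem_insert]⟩

theorem Finmap.disjoint_iff_disjoint_keys {α : Type*} {β : α → Type*} [DecidableEq α]
    {m₁ m₂ : Finmap β} : m₁.Disjoint m₂ ↔ _root_.Disjoint m₁.keys m₂.keys := by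
  simp [Finmap.Disjoint, Finset.disjoint_left, Finmap.mem_keys]

namespace Spatial

def footprint (s : Stack) : Spatial → Finset ℕ
  | emp => ∅
  | pto t _ => {t.eval s}
  | arr t u => Finset.Icc (t.eval s) (u.eval s)
  | star F G => F.footprint s ∪ G.footprint s

/-- The spatial conjuncts of `γ`. -/
def WellFormed (s : Stack) (F : Spatial) : Prop :=
  (∀ p ∈ F.absArrays, Trm.eval s p.1 ≤ Trm.eval s p.2) ∧
  F.absArrays.Pairwise (fun p q =>
    Trm.eval s p.2 < Trm.eval s q.1 ∨ Trm.eval s q.2 < Trm.eval s p.1)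

variable {s : Stack}

theorem mem_footprint {F : Spatial} {k : ℕ} :
    k ∈ F.footprint s ↔ ∃ p ∈ F.absArrays, p.1.eval s ≤ k ∧ k ≤ p.2.eval s := by
  induction F with
  | emp => simp [footprint, absArrays]
  | pto t u => simp [footprint, absArrays, le_antisymm_iff, and_comm]
  | arr t u => simp [footprint, absArrays]
  | star F G ihF ihG => simp only [footprint, absArrays, Finset.mem_union, ihF, ihG,
      List.mem_append, or_and_right, exists_or]

theorem wellFormed_star {F G : Spatial} :
    (star F G).WellFormed s ↔
      F.WellFormed s ∧ G.WellFormed s ∧ Disjoint (F.footprint s) (G.footprint s) := by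
  simp only [WellFormed, absArrays, List.forall_mem_append, List.pairwise_append,
    Finset.disjoint_left, mem_footprint]
  constructor
  · rintro ⟨⟨hleF, hleG⟩, hF, hG, hsep⟩
    refine ⟨⟨hleF, hF⟩, ⟨hleG, hG⟩, ?_⟩
    rintro k ⟨p, hp, hpk, hkp⟩ ⟨q, hq, hqk, hkq⟩
    rcases hsep p hp q hq with h | h <;> omega
  · rintro ⟨⟨hleF, hF⟩, ⟨hleG, hG⟩, hdisj⟩
    refine ⟨⟨hleF, hleG⟩, hF, hG, fun p hp q hq => ?_⟩
    by_contra! hoverlap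
    have := hleF p hp
    have := hleG q hq
    -- the larger left endpoint lies in both intervals
    exact hdisj ⟨p, hp, le_max_left _ _, by omega⟩ ⟨q, hq, le_max_right _ _, by omega⟩

theorem sat.keys_eq {F : Spatial} {h : Heap} (hF : F.sat s h) : h.keys = F.footprint s := by
  induction F generalizing h with
  | emp => rw [show h = ∅ from hF]; rfl
  | pto t u => exact hF.1
  | arr t u => exact hF.2
  | star F G ihF ihG =>
    obtain ⟨h₁, h₂, -, rfl, hF, hG⟩ := hF
    rw [Finmap.keys_union, ihF hF, ihG hG]
    rfl

theorem sat.wellFormed {F : Spatial} {h : Heap} (hF : F.sat s h) : F.WellFormed s := by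
  induction F generalizing h with
  | emp | pto => simp [WellFormed, absArrays]
  | arr t u => simpa [WellFormed, absArrays] using hF.1
  | star F G ihF ihG =>
    obtain ⟨h₁, h₂, hdisj, -, hF, hG⟩ := hF
    rw [Finmap.disjoint_iff_disjoint_keys, hF.keys_eq, hG.keys_eq] at hdisj
    exact wellFormed_star.2 ⟨ihF hF, ihG hG, hdisj⟩

theorem WellFormed.exists_sat {F : Spatial} (hF : F.WellFormed s) : ∃ h : Heap, F.sat s h := by
  induction F with
  | emp => exact ⟨∅, rfl⟩
  | pto t u => exact ⟨Finmap.singleton (t.eval s) (u.eval s),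
      Finmap.keys_singleton _ _, Finmap.lookup_singleton_eq⟩
  | arr t u =>
    obtain ⟨h, hkeys⟩ := Finmap.exists_keys_eq (fun _ => 0) (Finset.Icc (t.eval s) (u.eval s))
    exact ⟨h, hF.1 (t, u) (List.mem_singleton_self _), hkeys⟩
  | star F G ihF ihG =>
    obtain ⟨hwfF, hwfG, hdisj⟩ := wellFormed_star.1 hF
    obtain ⟨h₁, hF⟩ := ihF hwfF
    obtain ⟨h₂, hG⟩ := ihG hwfG
    rw [← hF.keys_eq, ← hG.keys_eq, ← Finmap.disjoint_iff_disjoint_keys] at hdisj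
    exact ⟨h₁ ∪ h₂, h₁, h₂, hdisj, rfl, hF, hG⟩

theorem exists_sat_iff_wellFormed {F : Spatial} : (∃ h : Heap, F.sat s h) ↔ F.WellFormed s :=
  ⟨fun ⟨_, hF⟩ => hF.wellFormed, WellFormed.exists_sat⟩

end Spatial

/-- A quantifier-free symbolic heap `A` is satisfiable iff its Presburger
encoding `γ(A)` is satisfiable over ℕ. -/
theorem stmt_3 (A : SymHeap) :
    A.Satisfiable ↔ ∃ s : Stack, gammaSat A s := by
  simp only [SymHeap.Satisfiable, SymHeap.sat, exists_and_left]
  exact exists_congr fun s => and_congr_right fun _ => Spatial.exists_sat_iff_wellFormed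
end

section
/- Let (B, S) be a 3-partition instance with S = (k_1, …, k_{3m}), Σ k_j = mB, and B/4 < k_j < B/2 for all j, and let Ã_{B,S} and B̃_{B,S} be as constructed from it. Then the biabduction problem (Ã_{B,S}, B̃_{B,S}) has a solution (i.e., there exist quantifier-free symbolic heaps X, Y with Ã_{B,S}*X satisfiable and Ã_{B,S}*X ⊨ B̃_{B,S}*Y) if and only if there exists a complete 3-partition of S with respect to B, i.e., a partition of {1,…,3m} into m triples each of whose k-values sums to B. -/
/-! ### The 3-partition reduction. Variables: `d_{i+1}` is `var i` for `i ∈ [0,m]`,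
and `a_{j+1}` is `var (m+1+j)` for `j ∈ [0,3m)`. -/

/-- The symbolic heap `A_{B,S}`:
`⋀_{i=1}^{m} (d_{i+1} = dᵢ + B + 1) ∧ ⋀_{j=1}^{3m} (d₁ ≤ aⱼ ∧ aⱼ + kⱼ < d_{m+1})
 : ⊛_{i=1}^{m+1} array(dᵢ,dᵢ) * ⊛_{j=1}^{3m} array(aⱼ+1, aⱼ+kⱼ)`. -/
def heapABS (m B : ℕ) (k : Fin (3 * m) → ℕ) : SymHeap :=
  ⟨PureF.and
      (bigAnd (List.ofFn fun i : Fin m =>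
        PureF.eq (Trm.var (i.1 + 1)) (Trm.add (Trm.var i.1) (Trm.const (B + 1)))))
      (bigAnd (List.ofFn fun j : Fin (3 * m) =>
        PureF.and (PureF.le (Trm.var 0) (Trm.var (m + 1 + j.1)))
          (PureF.lt (Trm.add (Trm.var (m + 1 + j.1)) (Trm.const (k j))) (Trm.var m)))),
   Spatial.star
      (bigStar (List.ofFn fun i : Fin (m + 1) => Spatial.arr (Trm.var i.1) (Trm.var i.1)))
      (bigStar (List.ofFn fun j : Fin (3 * m) =>
        Spatial.arr (Trm.add (Trm.var (m + 1 + j.1)) (Trm.const 1))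
          (Trm.add (Trm.var (m + 1 + j.1)) (Trm.const (k j)))))⟩

/-- The symbolic heap `Ã_{B,S}`:
`⋀_{i=1}^{m} (d_{i+1} = dᵢ + B + 1) : ⊛_{i=1}^{m+1} array(dᵢ,dᵢ)`. -/
def heapAtil (m B : ℕ) : SymHeap :=
  ⟨bigAnd (List.ofFn fun i : Fin m =>
      PureF.eq (Trm.var (i.1 + 1)) (Trm.add (Trm.var i.1) (Trm.const (B + 1)))),
   bigStar (List.ofFn fun i : Fin (m + 1) => Spatial.arr (Trm.var i.1) (Trm.var i.1))⟩

/-- The symbolic heap `B̃_{B,S}`: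
`⋀_{i=1}^{m} (d_{i+1} > dᵢ) ∧ ⋀_{j=1}^{3m} (d₁ ≤ aⱼ ∧ aⱼ + kⱼ < d_{m+1})
 : ⊛_{i=1}^{m+1} array(dᵢ,dᵢ) * ⊛_{j=1}^{3m} array(aⱼ+1, aⱼ+kⱼ)`. -/
def heapBtil (m : ℕ) (k : Fin (3 * m) → ℕ) : SymHeap :=
  ⟨PureF.and
      (bigAnd (List.ofFn fun i : Fin m => PureF.lt (Trm.var i.1) (Trm.var (i.1 + 1))))
      (bigAnd (List.ofFn fun j : Fin (3 * m) =>
        PureF.and (PureF.le (Trm.var 0) (Trm.var (m + 1 + j.1)))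
          (PureF.lt (Trm.add (Trm.var (m + 1 + j.1)) (Trm.const (k j))) (Trm.var m)))),
   Spatial.star
      (bigStar (List.ofFn fun i : Fin (m + 1) => Spatial.arr (Trm.var i.1) (Trm.var i.1)))
      (bigStar (List.ofFn fun j : Fin (3 * m) =>
        Spatial.arr (Trm.add (Trm.var (m + 1 + j.1)) (Trm.const 1))
          (Trm.add (Trm.var (m + 1 + j.1)) (Trm.const (k j)))))⟩

/-- A complete 3-partition of `S = (k₁,…,k_{3m})` w.r.t. `B`: a partition of the
indices into `m` groups of three, each of whose `k`-values sums to `B`. -/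
def HasThreePartition (m B : ℕ) (k : Fin (3 * m) → ℕ) : Prop :=
  ∃ f : Fin (3 * m) → Fin m, ∀ i : Fin m,
    (Finset.univ.filter fun j => f j = i).card = 3 ∧
    ∑ j ∈ Finset.univ.filter (fun j => f j = i), k j = B

/-!
`Ã` pins the one-cell arrays `d₁ < ⋯ < d_{m+1}` exactly `B + 1` apart, leaving `m` gaps of `B`
cells. In a model of `Ã * X` that also satisfies `B̃ * Y`, the `3m` arrays of lengths `kⱼ` lie
disjointly in `[d₁, d_{m+1})` and avoid the cells `dᵢ`, so each one lies inside a single gap.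
A gap holds at most `B` cells while the lengths add up to `mB`, so every gap is exactly full,
and `B/4 < kⱼ < B/2` leaves room for exactly three arrays per gap. Conversely, a 3-partition is
realised by the `X` that fixes each `aⱼ` so as to pack the arrays of every triple side by side
into one gap, with `Y = emp`.
-/

open Finset

theorem Finmap.disjoint_iff_disjoint_keys_s12 {α : Type*} {β : α → Type*}
    {h₁ h₂ : Finmap β} : h₁.Disjoint h₂ ↔ _root_.Disjoint h₁.keys h₂.keys := by
  simp [Finmap.Disjoint, Finset.disjoint_left, Finmap.mem_keys]

theorem exists_heap_keys_eq (S : Finset ℕ) : ∃ h : Heap, h.keys = S :=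
  ⟨Finmap.keysLookupEquiv.symm ⟨(S, fun a => if a ∈ S then some 0 else none),
    fun a => by by_cases ha : a ∈ S <;> simp [ha]⟩, by simp⟩

theorem PureF.sat_bigAnd {s : Stack} {L : List PureF} :
    (bigAnd L).sat s ↔ ∀ p ∈ L, p.sat s := by
  induction L with
  | nil => simp [bigAnd, PureF.sat]
  | cons p L ih => simp [bigAnd, PureF.sat, ih]

theorem Spatial.sat_bigStar_append {s : Stack} {h : Heap} (F G : List Spatial) :
    (bigStar (F ++ G)).sat s h ↔ (Spatial.star (bigStar F) (bigStar G)).sat s h := by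
  induction F generalizing h with
  | nil =>
    simp only [List.nil_append, bigStar, Spatial.sat]
    constructor
    · exact fun hG => ⟨∅, h, Finmap.disjoint_empty h, Finmap.empty_union.symm, rfl, hG⟩
    · rintro ⟨_, _, -, rfl, rfl, hG⟩
      rwa [Finmap.empty_union]
  | cons F₀ F ih =>
    simp only [List.cons_append, bigStar, Spatial.sat] at ih ⊢
    constructor
    · rintro ⟨h₁, h₂, hd, rfl, h₁F₀, h₂FG⟩
      obtain ⟨h₃, h₄, hd', rfl, h₃F, h₄G⟩ := ih.mp h₂FG
      rw [Finmap.disjoint_union_right] at hd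
      refine ⟨h₁ ∪ h₃, h₄, (Finmap.disjoint_union_left _ _ _).mpr ⟨hd.2, hd'⟩,
        Finmap.union_assoc.symm, ⟨h₁, h₃, hd.1, rfl, h₁F₀, h₃F⟩, h₄G⟩
    · rintro ⟨_, h₂, hd, rfl, ⟨h₃, h₄, hd', rfl, h₃F₀, h₄F⟩, h₂G⟩
      rw [Finmap.disjoint_union_left] at hd
      refine ⟨h₃, h₄ ∪ h₂, (Finmap.disjoint_union_right _ _ _).mpr ⟨hd', hd.1⟩,
        Finmap.union_assoc, h₃F₀, ih.mpr ⟨h₄, h₂, hd.2, rfl, h₄F, h₂G⟩⟩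

def arrCells (s : Stack) (p : Trm × Trm) : Finset ℕ := Icc (p.1.eval s) (p.2.eval s)

def bigStarArr (L : List (Trm × Trm)) : Spatial := bigStar (L.map fun p => .arr p.1 p.2)

theorem Spatial.sat_bigStarArr {s : Stack} {h : Heap} {L : List (Trm × Trm)}
    (hL : (bigStarArr L).sat s h) :
    (∀ p ∈ L, p.1.eval s ≤ p.2.eval s) ∧
      L.Pairwise (fun p q => Disjoint (arrCells s p) (arrCells s q)) ∧
      ∀ x, x ∈ h.keys ↔ ∃ p ∈ L, x ∈ arrCells s p := by
  induction L generalizing h with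
  | nil =>
    obtain rfl : h = ∅ := hL
    simp
  | cons p L ih =>
    obtain ⟨h₁, h₂, hd, rfl, ⟨hp, h₁keys⟩, h₂L⟩ := hL
    obtain ⟨hle, hpw, h₂keys⟩ := ih h₂L
    rw [Finmap.disjoint_iff_disjoint_keys_s12, h₁keys] at hd
    refine ⟨List.forall_mem_cons.mpr ⟨hp, hle⟩, List.Pairwise.cons ?_ hpw, ?_⟩
    · exact fun q hq => disjoint_left.mpr fun x hxp hxq =>
        disjoint_left.mp hd hxp ((h₂keys x).mpr ⟨q, hq, hxq⟩)
    · intro x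
      simp [Finmap.keys_union, h₁keys, h₂keys, arrCells]

theorem exists_sat_bigStarArr (s : Stack) {L : List (Trm × Trm)}
    (hle : ∀ p ∈ L, p.1.eval s ≤ p.2.eval s)
    (hpw : L.Pairwise (fun p q => Disjoint (arrCells s p) (arrCells s q))) :
    ∃ h : Heap, (bigStarArr L).sat s h ∧ ∀ x, x ∈ h.keys ↔ ∃ p ∈ L, x ∈ arrCells s p := by
  induction L with
  | nil => exact ⟨∅, rfl, by simp⟩
  | cons p L ih =>
    obtain ⟨hpL, hpw⟩ := List.pairwise_cons.mp hpw
    obtain ⟨hp, hle⟩ := List.forall_mem_cons.mp hle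
    obtain ⟨h₂, h₂L, h₂keys⟩ := ih hle hpw
    obtain ⟨h₁, h₁keys⟩ := exists_heap_keys_eq (arrCells s p)
    refine ⟨h₁ ∪ h₂, ⟨h₁, h₂, ?_, rfl, ⟨hp, h₁keys⟩, h₂L⟩, fun x => ?_⟩
    · rw [Finmap.disjoint_iff_disjoint_keys_s12, h₁keys]
      refine disjoint_left.mpr fun x hxp hx₂ => ?_
      obtain ⟨q, hq, hxq⟩ := (h₂keys x).mp hx₂
      exact disjoint_left.mp (hpL q hq) hxp hxq
    · simp [Finmap.keys_union, h₁keys, h₂keys, arrCells]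

def cellPairs (m : ℕ) : List (Trm × Trm) :=
  List.ofFn fun i : Fin (m + 1) => (.var i, .var i)

def blockPairs (m : ℕ) (k : Fin (3 * m) → ℕ) : List (Trm × Trm) :=
  List.ofFn fun j : Fin (3 * m) =>
    (.add (.var (m + 1 + j)) (.const 1), .add (.var (m + 1 + j)) (.const (k j)))

theorem heapAtil_spatial (m B : ℕ) : (heapAtil m B).spatial = bigStarArr (cellPairs m) := by
  simp only [heapAtil, bigStarArr, cellPairs, List.map_ofFn]
  rfl

theorem heapBtil_spatial (m : ℕ) (k : Fin (3 * m) → ℕ) :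
    (heapBtil m k).spatial = .star (bigStarArr (cellPairs m)) (bigStarArr (blockPairs m k)) := by
  simp only [heapBtil, bigStarArr, cellPairs, blockPairs, List.map_ofFn]
  rfl

theorem heapAtil_pure_sat {m B : ℕ} {s : Stack} :
    (heapAtil m B).pure.sat s ↔ ∀ i : Fin m, s (i + 1) = s i + (B + 1) := by
  simp [heapAtil, PureF.sat_bigAnd, PureF.sat, Trm.eval]

theorem heapBtil_pure_sat {m : ℕ} {k : Fin (3 * m) → ℕ} {s : Stack} :
    (heapBtil m k).pure.sat s ↔ (∀ i : Fin m, s i < s (i + 1)) ∧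
      ∀ j : Fin (3 * m), s 0 ≤ s (m + 1 + j) ∧ s (m + 1 + j) + k j < s m := by
  simp [heapBtil, PureF.sat_bigAnd, PureF.sat, Trm.eval]

section Spacing

variable {s : Stack} {m B : ℕ}

theorem add_succ_le_of_spaced (hA : ∀ i : Fin m, s (i + 1) = s i + (B + 1)) {i i' : ℕ}
    (hii' : i < i') (hi' : i' ≤ m) : s i + (B + 1) ≤ s i' := by
  induction i', hii' using Nat.le_induction with
  | base => exact (hA ⟨i, hi'⟩).ge
  | succ n hn ih =>
    have hstep : s (n + 1) = s n + (B + 1) := hA ⟨n, hi'⟩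
    have := ih (by omega)
    omega

theorem le_of_spaced (hA : ∀ i : Fin m, s (i + 1) = s i + (B + 1)) {i i' : ℕ}
    (hii' : i ≤ i') (hi' : i' ≤ m) : s i ≤ s i' := by
  rcases hii'.lt_or_eq with hlt | rfl
  · have := add_succ_le_of_spaced hA hlt hi'
    omega
  · rfl

end Spacing

theorem exists_gap (c : ℕ → ℕ) {x n : ℕ} (h0 : c 0 ≤ x) (hn : x < c n) :
    ∃ i < n, c i ≤ x ∧ x < c (i + 1) := by
  induction n with
  | zero => omega
  | succ n ih =>
    by_cases hx : x < c n
    · obtain ⟨i, hi, h⟩ := ih hx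
      exact ⟨i, by omega, h⟩
    · exact ⟨n, by omega, by omega, hn⟩

theorem exists_subset_gap_of_spaced {s : Stack} {m B a l : ℕ}
    (hA : ∀ i : Fin m, s (i + 1) = s i + (B + 1)) (h0 : s 0 ≤ a) (hm : a + l < s m)
    (hcells : ∀ i ≤ m, s i ∉ Icc (a + 1) (a + l)) :
    ∃ i : Fin m, Icc (a + 1) (a + l) ⊆ Icc (s i + 1) (s i + B) := by
  obtain ⟨i, hi, hle, hlt⟩ := exists_gap s h0 (by omega : a < s m)
  have hnext := hcells (i + 1) hi
  have hstep : s (i + 1) = s i + (B + 1) := hA ⟨i, hi⟩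
  rw [mem_Icc] at hnext
  refine ⟨⟨i, hi⟩, Icc_subset_Icc ?_ ?_⟩ <;> dsimp only <;> omega

theorem Finset.sum_card_le_card_of_pairwiseDisjoint {ι α : Type*} [DecidableEq α]
    {T : Finset ι} {t : ι → Finset α} {U : Finset α} (hd : (T : Set ι).PairwiseDisjoint t)
    (hU : ∀ j ∈ T, t j ⊆ U) : ∑ j ∈ T, #(t j) ≤ #U := by
  rw [← card_biUnion hd]
  exact card_le_card (biUnion_subset.mpr hU)

theorem sum_fiber_eq_of_sum_fiber_le {ι κ : Type*} [Fintype ι] [Fintype κ] [DecidableEq κ]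
    {f : ι → κ} {k : ι → ℕ} {B : ℕ} (hle : ∀ i, ∑ j ∈ {j | f j = i}, k j ≤ B)
    (hsum : ∑ j, k j = Fintype.card κ * B) (i : κ) : ∑ j ∈ {j | f j = i}, k j = B := by
  have htotal : ∑ i, ∑ j ∈ {j | f j = i}, k j = ∑ _i : κ, B := by
    rw [sum_fiberwise, hsum, sum_const, card_univ, smul_eq_mul]
  exact (sum_eq_sum_iff_of_le fun i _ => hle i).mp htotal i (mem_univ i)

theorem card_eq_three_of_sum_eq {ι : Type*} {T : Finset ι} {k : ι → ℕ} {B : ℕ} (hB : 0 < B)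
    (hT : ∑ j ∈ T, k j = B) (hk : ∀ j ∈ T, B < 4 * k j ∧ 2 * k j < B) : #T = 3 := by
  have hne : T.Nonempty := nonempty_of_sum_ne_zero (hT ▸ hB.ne')
  have hlt4 : #T * B < 4 * B := calc
    #T * B = ∑ _j ∈ T, B := by rw [sum_const, smul_eq_mul]
    _ < ∑ j ∈ T, 4 * k j := sum_lt_sum_of_nonempty hne fun j hj => (hk j hj).1
    _ = 4 * B := by rw [← mul_sum, hT]
  have hgt2 : 2 * B < #T * B := calc
    2 * B = ∑ j ∈ T, 2 * k j := by rw [← mul_sum, hT]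
    _ < ∑ _j ∈ T, B := sum_lt_sum_of_nonempty hne fun j hj => (hk j hj).2
    _ = #T * B := by rw [sum_const, smul_eq_mul]
  have := Nat.lt_of_mul_lt_mul_right hlt4
  have := Nat.lt_of_mul_lt_mul_right hgt2
  omega

theorem hasThreePartition_of_sum_fiber_le {m B : ℕ} {k : Fin (3 * m) → ℕ}
    (hsum : ∑ j, k j = m * B) (hbound : ∀ j, B < 4 * k j ∧ 2 * k j < B)
    (f : Fin (3 * m) → Fin m) (hle : ∀ i, ∑ j ∈ {j | f j = i}, k j ≤ B) :
    HasThreePartition m B k := by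
  replace hsum : ∑ j, k j = Fintype.card (Fin m) * B := by rw [Fintype.card_fin, hsum]
  refine ⟨f, fun i => ?_⟩
  have hB : 0 < B := by
    have := hbound ⟨0, by have := i.pos; omega⟩
    omega
  have hfiber := sum_fiber_eq_of_sum_fiber_le hle hsum i
  exact ⟨card_eq_three_of_sum_eq hB hfiber fun j _ => hbound j, hfiber⟩

def blockCells (s : Stack) (m : ℕ) (k : Fin (3 * m) → ℕ) (j : Fin (3 * m)) : Finset ℕ :=
  Icc (s (m + 1 + j) + 1) (s (m + 1 + j) + k j)

theorem Spatial.sat_star_bigStarArr {s : Stack} {h : Heap} {L L' : List (Trm × Trm)} :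
    (Spatial.star (bigStarArr L) (bigStarArr L')).sat s h ↔ (bigStarArr (L ++ L')).sat s h := by
  rw [bigStarArr, bigStarArr, bigStarArr, List.map_append, sat_bigStar_append]

theorem disjoint_cells_blocks_of_sat {m : ℕ} {k : Fin (3 * m) → ℕ} {s : Stack} {h : Heap}
    (hB : (heapBtil m k).spatial.sat s h) :
    (∀ i ≤ m, ∀ j, s i ∉ blockCells s m k j) ∧
      Pairwise fun j j' => Disjoint (blockCells s m k j) (blockCells s m k j') := by
  rw [heapBtil_spatial, Spatial.sat_star_bigStarArr] at hB
  obtain ⟨-, hpw, -⟩ := Spatial.sat_bigStarArr hB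
  obtain ⟨-, hblocks, hcross⟩ := List.pairwise_append.mp hpw
  refine ⟨fun i hi j hij => ?_, fun j j' hne => ?_⟩
  · have hd := hcross _ (List.mem_ofFn.mpr ⟨⟨i, by omega⟩, rfl⟩) _ (List.mem_ofFn.mpr ⟨j, rfl⟩)
    exact disjoint_left.mp hd (by simp [arrCells, Trm.eval]) hij
  · rw [blockPairs, List.pairwise_ofFn] at hblocks
    rcases hne.lt_or_gt with hlt | hlt
    · exact hblocks hlt
    · exact (hblocks hlt).symm

theorem hasThreePartition_of_hasBiabductionSolution {m B : ℕ} {k : Fin (3 * m) → ℕ}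
    (hsum : ∑ j, k j = m * B) (hbound : ∀ j, B < 4 * k j ∧ 2 * k j < B)
    (hsol : HasBiabductionSolution (heapAtil m B) (heapBtil m k)) :
    HasThreePartition m B k := by
  obtain ⟨X, Y, ⟨s, h, hAX⟩, hent⟩ := hsol
  obtain ⟨⟨hBpure, -⟩, h₁, -, -, -, hBspatial, -⟩ := hent s h hAX
  have hA := heapAtil_pure_sat.mp hAX.1.1
  obtain ⟨-, hbounds⟩ := heapBtil_pure_sat.mp hBpure
  obtain ⟨hcells, hblocks⟩ := disjoint_cells_blocks_of_sat hBspatial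
  have hgap (j : Fin (3 * m)) : ∃ i : Fin m, blockCells s m k j ⊆ Icc (s i + 1) (s i + B) :=
    exists_subset_gap_of_spaced hA (hbounds j).1 (hbounds j).2 fun i hi => hcells i hi j
  choose f hf using hgap
  refine hasThreePartition_of_sum_fiber_le hsum hbound f fun i => ?_
  calc ∑ j ∈ {j | f j = i}, k j = ∑ j ∈ {j | f j = i}, #(blockCells s m k j) := by
        simp [blockCells]
    _ ≤ #(Icc (s i + 1) (s i + B)) :=
        sum_card_le_card_of_pairwiseDisjoint (hblocks.set_pairwise _) fun j hj =>
          (mem_filter.mp hj).2 ▸ hf j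
    _ = B := by simp

section Offset

variable {ι κ : Type*} [Fintype ι] [LinearOrder ι] [DecidableEq κ]

def offset (f : ι → κ) (k : ι → ℕ) (j : ι) : ℕ := ∑ j' ∈ {j' | f j' = f j ∧ j' < j}, k j'

theorem offset_add_self (f : ι → κ) (k : ι → ℕ) (j : ι) :
    offset f k j + k j = ∑ j' ∈ {j' | f j' = f j ∧ j' ≤ j}, k j' := by
  have hinsert : univ.filter (fun j' => f j' = f j ∧ j' ≤ j) =
      insert j (univ.filter fun j' => f j' = f j ∧ j' < j) := by
    ext j'
    simp only [mem_insert, mem_filter, mem_univ, true_and, le_iff_lt_or_eq]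
    constructor
    · rintro ⟨hf, hlt | rfl⟩ <;> simp_all
    · rintro (rfl | ⟨hf, hlt⟩) <;> simp_all
  rw [hinsert, sum_insert (by simp), add_comm, offset]

theorem offset_add_le_sum_fiber (f : ι → κ) (k : ι → ℕ) (j : ι) :
    offset f k j + k j ≤ ∑ j' ∈ {j' | f j' = f j}, k j' := by
  rw [offset_add_self]
  exact sum_le_sum_of_subset (monotone_filter_right _ fun _ _ h => h.1)

theorem offset_add_le_offset (f : ι → κ) (k : ι → ℕ) {j j' : ι} (hjj' : j < j')
    (hf : f j = f j') : offset f k j + k j ≤ offset f k j' := by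
  rw [offset_add_self, offset]
  refine sum_le_sum_of_subset (monotone_filter_right _ fun _ _ hx => ?_)
  exact ⟨hx.1.trans hf, hx.2.trans_lt hjj'⟩

end Offset

section Layout

variable {m B : ℕ} {k : Fin (3 * m) → ℕ} {f : Fin (3 * m) → Fin m} {s : Stack}

theorem pairwise_disjoint_cells_blocks (hA : ∀ i : Fin m, s (i + 1) = s i + (B + 1))
    (hX : ∀ j : Fin (3 * m), s (m + 1 + j) = s (f j) + offset f k j)
    (hfit : ∀ j, offset f k j + k j ≤ B) :
    (cellPairs m ++ blockPairs m k).Pairwise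
      fun p q => Disjoint (arrCells s p) (arrCells s q) := by
  rw [List.pairwise_append, cellPairs, blockPairs, List.pairwise_ofFn, List.pairwise_ofFn]
  simp only [List.mem_ofFn, forall_exists_index, forall_apply_eq_imp_iff, arrCells, Trm.eval,
    disjoint_left, mem_Icc]
  refine ⟨fun i i' hii' x hx hx' => ?_, fun j j' hjj' x hx hx' => ?_, fun i j x hx hx' => ?_⟩
  · have := add_succ_le_of_spaced hA hii' (by omega)
    omega
  · have hj := hX j
    have hj' := hX j'
    have hfitj := hfit j
    rcases lt_trichotomy (f j) (f j') with hlt | heq | hgt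
    · have := add_succ_le_of_spaced hA hlt (f j').is_lt.le
      omega
    · have := offset_add_le_offset f k hjj' heq
      rw [heq] at hj
      omega
    · have := add_succ_le_of_spaced hA hgt (f j).is_lt.le
      have := hfit j'
      omega
  · have hj := hX j
    have hfitj := hfit j
    rcases le_or_gt (i : ℕ) (f j) with hle | hgt
    · have := le_of_spaced hA hle (f j).is_lt.le
      omega
    · have := add_succ_le_of_spaced hA hgt (by omega)
      omega

theorem heapBtil_pure_of_layout (hA : ∀ i : Fin m, s (i + 1) = s i + (B + 1))
    (hX : ∀ j : Fin (3 * m), s (m + 1 + j) = s (f j) + offset f k j)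
    (hfit : ∀ j, offset f k j + k j ≤ B) : (heapBtil m k).pure.sat s := by
  refine heapBtil_pure_sat.mpr ⟨fun i => ?_, fun j => ⟨?_, ?_⟩⟩
  · have := hA i
    omega
  · have := le_of_spaced hA (Nat.zero_le (f j)) (f j).is_lt.le
    have := hX j
    omega
  · have := add_succ_le_of_spaced hA (f j).is_lt le_rfl
    have := hX j
    have := hfit j
    omega

end Layout

def partitionSolution (m : ℕ) (k : Fin (3 * m) → ℕ) (f : Fin (3 * m) → Fin m) : SymHeap :=
  ⟨bigAnd (List.ofFn fun j : Fin (3 * m) =>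
      .eq (.var (m + 1 + j)) (.add (.var (f j)) (.const (offset f k j)))),
   bigStarArr (blockPairs m k)⟩

theorem partitionSolution_pure_sat {m : ℕ} {k : Fin (3 * m) → ℕ} {f : Fin (3 * m) → Fin m}
    {s : Stack} : (partitionSolution m k f).pure.sat s ↔
      ∀ j : Fin (3 * m), s (m + 1 + j) = s (f j) + offset f k j := by
  simp [partitionSolution, PureF.sat_bigAnd, PureF.sat, Trm.eval]

def layoutStack (m B : ℕ) (k : Fin (3 * m) → ℕ) (f : Fin (3 * m) → Fin m) : Stack := fun n =>
  if h : m < n ∧ n - (m + 1) < 3 * m then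
    (f ⟨n - (m + 1), h.2⟩ : ℕ) * (B + 1) + offset f k ⟨n - (m + 1), h.2⟩
  else n * (B + 1)

theorem layoutStack_of_le {m B : ℕ} {k : Fin (3 * m) → ℕ} {f : Fin (3 * m) → Fin m} {n : ℕ}
    (hn : n ≤ m) : layoutStack m B k f n = n * (B + 1) := by
  rw [layoutStack, dif_neg (by omega)]

theorem layoutStack_block {m B : ℕ} {k : Fin (3 * m) → ℕ} {f : Fin (3 * m) → Fin m}
    (j : Fin (3 * m)) : layoutStack m B k f (m + 1 + j) = f j * (B + 1) + offset f k j := by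
  have hj : m < m + 1 + j ∧ m + 1 + j - (m + 1) < 3 * m := by omega
  rw [layoutStack, dif_pos hj]
  congr <;> simp

theorem hasBiabductionSolution_of_hasThreePartition {m B : ℕ} {k : Fin (3 * m) → ℕ}
    (hbound : ∀ j, B < 4 * k j ∧ 2 * k j < B) (hpart : HasThreePartition m B k) :
    HasBiabductionSolution (heapAtil m B) (heapBtil m k) := by
  obtain ⟨f, hf⟩ := hpart
  have hfit (j : Fin (3 * m)) : offset f k j + k j ≤ B :=
    (offset_add_le_sum_fiber f k j).trans (hf (f j)).2.le
  refine ⟨partitionSolution m k f, ⟨.tru, .emp⟩, ?_, ?_⟩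
  · set s := layoutStack m B k f with hs
    have hA (i : Fin m) : s (i + 1) = s i + (B + 1) := by
      rw [hs, layoutStack_of_le (by omega), layoutStack_of_le (by omega), add_one_mul]
    have hX (j : Fin (3 * m)) : s (m + 1 + j) = s (f j) + offset f k j := by
      rw [hs, layoutStack_block, layoutStack_of_le (f j).is_lt.le]
    have hle : ∀ p ∈ cellPairs m ++ blockPairs m k, p.1.eval s ≤ p.2.eval s := by
      simp only [cellPairs, blockPairs, List.mem_append, List.mem_ofFn]
      rintro p (⟨i, rfl⟩ | ⟨j, rfl⟩)
      · exact le_rfl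
      · have := hbound j
        simp only [Trm.eval]
        omega
    obtain ⟨h, hsat, -⟩ := exists_sat_bigStarArr s hle (pairwise_disjoint_cells_blocks hA hX hfit)
    refine ⟨s, h, ⟨heapAtil_pure_sat.mpr hA, partitionSolution_pure_sat.mpr hX⟩, ?_⟩
    rwa [SymHeap.star, heapAtil_spatial, partitionSolution, Spatial.sat_star_bigStarArr]
  · rintro s h ⟨⟨hA, hX⟩, hsat⟩
    refine ⟨⟨heapBtil_pure_of_layout (heapAtil_pure_sat.mp hA)
      (partitionSolution_pure_sat.mp hX) hfit, trivial⟩,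
      h, ∅, fun _ _ hx => Finmap.notMem_empty hx, Finmap.union_empty.symm, ?_, rfl⟩
    rwa [heapBtil_spatial, ← heapAtil_spatial]

/-- Reduction of 3-partition to biabduction: the biabduction problem
`(Ã_{B,S}, B̃_{B,S})` has a solution iff there is a complete 3-partition of `S`
w.r.t. `B`. -/
theorem stmt_12 (m B : ℕ) (k : Fin (3 * m) → ℕ)
    (hsum : ∑ j, k j = m * B)
    (hbound : ∀ j, B < 4 * k j ∧ 2 * k j < B) :
    HasBiabductionSolution (heapAtil m B) (heapBtil m k) ↔ HasThreePartition m B k :=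
  ⟨hasThreePartition_of_hasBiabductionSolution hsum hbound,
    hasBiabductionSolution_of_hasThreePartition hbound⟩
end
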